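/- Let (X,d) be a compact metric space and f_{0,∞} = {f_n}_{n=0}^∞ a sequence of continuous surjective self-maps of X. If (X, f_{0,∞}) is not topologically mixing, then the induced system (𝓜(X), f̂_{0,∞}) does not have the shadowing property. -/

import Mathlib

open MeasureTheory Filter

/-- `nacomp f n = f_{n-1} ∘ ⋯ ∘ f_0` (with `nacomp f 0 = id`): the time-`n` map of the
non-autonomous system `(X, f_{0,∞})`. -/
def nacomp {Y : Type*} (f : ℕ → Y → Y) : ℕ → Y → Y
  | 0 => id
  | n + 1 => f n ∘ nacomp f n

/-- The induced pushforward map `f̂` on the space `𝓜(X)` of Borel probability measures,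
equipped with the Lévy–Prokhorov metric. -/
noncomputable def inducedMap {X : Type*} [MetricSpace X] [MeasurableSpace X] [BorelSpace X]
    (f : X → X) (hf : Continuous f) :
    LevyProkhorov (ProbabilityMeasure X) → LevyProkhorov (ProbabilityMeasure X) :=
  fun μ => (LevyProkhorov.toMeasureEquiv (α := ProbabilityMeasure X)).symm
    (((LevyProkhorov.toMeasureEquiv (α := ProbabilityMeasure X)) μ).map hf.measurable.aemeasurable)

/-- Topological mixing of the non-autonomous system given by the maps `f n`. -/
def NAMixing {Y : Type*} [TopologicalSpace Y] (f : ℕ → Y → Y) : Prop :=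
  ∀ U V : Set Y, IsOpen U → IsOpen V → U.Nonempty → V.Nonempty →
    ∃ N, 1 ≤ N ∧ ∀ n, N ≤ n → (nacomp f n '' U ∩ V).Nonempty

/-- The shadowing property of the non-autonomous system given by the maps `f n`. -/
def NAShadowing {Y : Type*} [PseudoMetricSpace Y] (f : ℕ → Y → Y) : Prop :=
  ∀ ε : ℝ, 0 < ε → ∃ δ : ℝ, 0 < δ ∧ ∀ x : ℕ → Y,
    (∀ n, dist (f n (x n)) (x (n + 1)) < δ) →
    ∃ z : Y, ∀ n, dist (nacomp f n z) (x n) < ε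
/-!
Suppose the induced system shadows with constant `ε < 1/2`, and take `x`, `y` and a large `n`.
By surjectivity there is an orbit `p` with `p n = y`. Moving the weight linearly from the orbit of
`x` to `p`, the measures `(1 - t_k) δ_{f_0^k x} + t_k δ_{p k}` with `t_k = min (k / n) 1` form a
`1/n`-pseudo-orbit from `δ_x` to `δ_y`. A measure `ζ` shadowing it gives mass `≥ 1 - ε` both to
`ball x ε` and to `(f_0^n)⁻¹' ball y ε`, so these sets meet: `f_0^n (ball x ε)` meets `ball y ε`
for all large `n`, which is mixing.
-/

open MeasureTheory Metric Set
open scoped ENNReal NNReal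

section NonAutonomous

variable {Y : Type*} (f : ℕ → Y → Y)

theorem continuous_nacomp [TopologicalSpace Y] (hf : ∀ n, Continuous (f n)) (n : ℕ) :
    Continuous (nacomp f n) := by
  induction n with
  | zero => exact continuous_id
  | succ n ih => exact (hf n).comp ih

theorem exists_orbit_eq_of_surjective (hsurj : ∀ n, (f n).Surjective) (n : ℕ) (y : Y) :
    ∃ p : ℕ → Y, (∀ k, f k (p k) = p (k + 1)) ∧ p n = y := by
  induction n generalizing y with
  | zero => exact ⟨fun k => nacomp f k y, fun _ => rfl, rfl⟩
  | succ n ih =>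
    obtain ⟨y', rfl⟩ := hsurj n y
    obtain ⟨p, hp, rfl⟩ := ih y'
    exact ⟨p, hp, (hp n).symm⟩

end NonAutonomous

namespace MeasureTheory.ProbabilityMeasure

variable {Ω : Type*} [MeasurableSpace Ω]

noncomputable def convexComb (μ ν : ProbabilityMeasure Ω) (t : ℝ≥0) (ht : t ≤ 1) :
    ProbabilityMeasure Ω :=
  ⟨(1 - t) • μ.toMeasure + t • ν.toMeasure, ⟨by
    simp only [Measure.add_apply, Measure.smul_apply, measure_univ, ENNReal.smul_def, smul_eq_mul,
      mul_one]
    rw [← ENNReal.coe_add, tsub_add_cancel_of_le ht, ENNReal.coe_one]⟩⟩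

@[simp]
theorem toMeasure_convexComb (μ ν : ProbabilityMeasure Ω) (t : ℝ≥0) (ht : t ≤ 1) :
    (μ.convexComb ν t ht).toMeasure = (1 - t) • μ.toMeasure + t • ν.toMeasure :=
  rfl

@[simp]
theorem convexComb_zero (μ ν : ProbabilityMeasure Ω) (h : (0 : ℝ≥0) ≤ 1) :
    μ.convexComb ν 0 h = μ := by
  ext1; simp

@[simp]
theorem convexComb_one (μ ν : ProbabilityMeasure Ω) (h : (1 : ℝ≥0) ≤ 1) :
    μ.convexComb ν 1 h = ν := by
  ext1; simp

theorem map_convexComb {Ω' : Type*} [MeasurableSpace Ω'] (μ ν : ProbabilityMeasure Ω) (t : ℝ≥0)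
    (ht : t ≤ 1) {g : Ω → Ω'} (hg : Measurable g) :
    (μ.convexComb ν t ht).map hg.aemeasurable =
      (μ.map hg.aemeasurable).convexComb (ν.map hg.aemeasurable) t ht := by
  ext1
  simp [Measure.map_add _ _ hg, Measure.map_smul]

theorem map_diracProba {Ω' : Type*} [MeasurableSpace Ω'] (x : Ω) {g : Ω → Ω'} (hg : Measurable g) :
    (diracProba x).map hg.aemeasurable = diracProba (g x) :=
  Subtype.ext (Measure.map_dirac' hg x)

end MeasureTheory.ProbabilityMeasure

section LevyProkhorov

variable {Ω : Type*} [MeasurableSpace Ω] [PseudoMetricSpace Ω]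

theorem levyProkhorovEDist_add_smul_le (ρ μ ν : Measure Ω) [IsProbabilityMeasure μ]
    [IsProbabilityMeasure ν] (a : ℝ≥0) :
    levyProkhorovEDist (ρ + a • μ) (ρ + a • ν) ≤ a := by
  refine levyProkhorovEDist_le_of_forall _ _ _ fun ε B haε hε _ => ?_
  have hB : B ⊆ thickening ε.toReal B :=
    self_subset_thickening (ENNReal.toReal_pos (pos_of_gt haε).ne' hε.ne) B
  have key : ∀ (μ ν : Measure Ω) [IsProbabilityMeasure μ],
      (ρ + a • μ) B ≤ (ρ + a • ν) (thickening ε.toReal B) + ε := fun μ ν _ =>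
    calc (ρ + a • μ) B = ρ B + a * μ B := by
          simp only [Measure.add_apply, Measure.smul_apply, ENNReal.smul_def, smul_eq_mul]
      _ ≤ ρ (thickening ε.toReal B) + a * 1 := by
          gcongr
          exact prob_le_one
      _ ≤ (ρ + a • ν) (thickening ε.toReal B) + ε := by
          simp only [mul_one, Measure.add_apply, Measure.smul_apply, add_assoc]
          gcongr
          exact haε.le.trans le_add_self
  exact ⟨key μ ν, key ν μ⟩

theorem levyProkhorovEDist_convexComb_le (μ ν : Measure Ω) [IsProbabilityMeasure μ]
    [IsProbabilityMeasure ν] {s t : ℝ≥0} (hst : s ≤ t) (ht : t ≤ 1) :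
    levyProkhorovEDist ((1 - s) • μ + s • ν) ((1 - t) • μ + t • ν) ≤ (t - s : ℝ≥0) := by
  have hs : (1 - s) • μ + s • ν = ((1 - t) • μ + s • ν) + (t - s) • μ := by
    rw [← tsub_add_tsub_cancel ht hst, add_smul]
    abel
  have ht : (1 - t) • μ + t • ν = ((1 - t) • μ + s • ν) + (t - s) • ν := by
    rw [add_assoc, ← add_smul, add_tsub_cancel_of_le hst]
  rw [hs, ht]
  exact levyProkhorovEDist_add_smul_le _ μ ν _

theorem one_sub_le_measureReal_ball_of_dist_diracProba_lt [OpensMeasurableSpace Ω]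
    {μ : LevyProkhorov (ProbabilityMeasure Ω)} {x : Ω} {ε : ℝ} (hε : 0 < ε)
    (h : dist μ (.ofMeasure (diracProba x)) < ε) :
    1 - ε ≤ (μ.toMeasure : Measure Ω).real (ball x ε) := by
  rw [LevyProkhorov.dist_probabilityMeasure_def, levyProkhorovDist,
    ← ENNReal.lt_ofReal_iff_toReal_lt (levyProkhorovEDist_ne_top _ _)] at h
  have key : 1 ≤ (μ.toMeasure : Measure Ω) (ball x ε) + ENNReal.ofReal ε := by
    have := right_measure_le_of_levyProkhorovEDist_lt h (isClosed_closure (s := {x})).measurableSet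
    rwa [ENNReal.toReal_ofReal hε.le, thickening_closure, thickening_singleton,
      show ((LevyProkhorov.ofMeasure (diracProba x)).toMeasure : Measure Ω) (closure {x}) = 1 from
        Measure.dirac_apply_of_mem (subset_closure rfl)] at this
  have := ENNReal.toReal_mono (by finiteness) key
  rw [ENNReal.toReal_add (by finiteness) ENNReal.ofReal_ne_top, ENNReal.toReal_ofReal hε.le,
    ENNReal.toReal_one] at this
  rw [measureReal_def]
  linarith

theorem dist_ofMeasure_convexComb_le [OpensMeasurableSpace Ω] (μ ν : ProbabilityMeasure Ω)
    {s t : ℝ≥0} (hst : s ≤ t) (hs : s ≤ 1) (ht : t ≤ 1) :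
    dist (LevyProkhorov.ofMeasure (μ.convexComb ν s hs))
      (LevyProkhorov.ofMeasure (μ.convexComb ν t ht)) ≤ (t - s : ℝ≥0) := by
  rw [LevyProkhorov.dist_probabilityMeasure_def, levyProkhorovDist, ← ENNReal.coe_toReal]
  exact ENNReal.toReal_mono ENNReal.coe_ne_top
    (levyProkhorovEDist_convexComb_le μ.toMeasure ν.toMeasure hst ht)

end LevyProkhorov

section Induced

variable {X : Type*} [MetricSpace X] [MeasurableSpace X] [BorelSpace X]

theorem inducedMap_ofMeasure {g : X → X} (hg : Continuous g) (μ : ProbabilityMeasure X) :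
    inducedMap g hg (.ofMeasure μ) = .ofMeasure (μ.map hg.measurable.aemeasurable) :=
  rfl

theorem toMeasure_inducedMap {g : X → X} (hg : Continuous g)
    (μ : LevyProkhorov (ProbabilityMeasure X)) :
    ((inducedMap g hg μ).toMeasure : Measure X) = (μ.toMeasure : Measure X).map g :=
  ProbabilityMeasure.toMeasure_map _ hg.measurable.aemeasurable

theorem toMeasure_nacomp_inducedMap {f : ℕ → X → X} (hf : ∀ n, Continuous (f n))
    (μ : LevyProkhorov (ProbabilityMeasure X)) (n : ℕ) :
    ((nacomp (fun k => inducedMap (f k) (hf k)) n μ).toMeasure : Measure X) =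
      (μ.toMeasure : Measure X).map (nacomp f n) := by
  induction n with
  | zero => exact Measure.map_id.symm
  | succ n ih =>
    rw [nacomp, Function.comp_apply, toMeasure_inducedMap, ih,
      Measure.map_map (hf n).measurable (continuous_nacomp f hf n).measurable]
    rfl

theorem exists_pseudoOrbit_diracProba {f : ℕ → X → X} (hf : ∀ n, Continuous (f n))
    (hsurj : ∀ n, (f n).Surjective) {n : ℕ} (hn : n ≠ 0) (x y : X) :
    ∃ μ : ℕ → LevyProkhorov (ProbabilityMeasure X),
      (∀ k, dist (inducedMap (f k) (hf k) (μ k)) (μ (k + 1)) ≤ 1 / n) ∧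
      μ 0 = .ofMeasure (diracProba x) ∧ μ n = .ofMeasure (diracProba y) := by
  obtain ⟨p, hp, hpn⟩ := exists_orbit_eq_of_surjective f hsurj n y
  set t : ℕ → ℝ≥0 := fun k => min (k / n) 1 with ht_def
  have ht : ∀ k, t k ≤ 1 := fun k => min_le_right _ _
  have ht_mono : ∀ k, t k ≤ t (k + 1) := fun k => by
    simp only [ht_def]
    gcongr
    exact k.le_succ
  have ht_succ : ∀ k, t (k + 1) - t k ≤ 1 / n := fun k => by
    rw [tsub_le_iff_left]
    calc t (k + 1) = min ((k : ℝ≥0) / n + 1 / n) 1 := by simp [ht_def, add_div]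
      _ ≤ min ((k : ℝ≥0) / n + 1 / n) (1 + 1 / n) := min_le_min le_rfl le_self_add
      _ = t k + 1 / n := min_add_add_right _ _ _
  refine ⟨fun k => .ofMeasure ((diracProba (nacomp f k x)).convexComb (diracProba (p k)) (t k)
    (ht k)), fun k => ?_, by simp [ht_def, nacomp], by simp [ht_def, hn, hpn]⟩
  calc _ = dist (LevyProkhorov.ofMeasure ((diracProba (nacomp f (k + 1) x)).convexComb
          (diracProba (p (k + 1))) (t k) (ht k)))
        (.ofMeasure ((diracProba (nacomp f (k + 1) x)).convexComb
          (diracProba (p (k + 1))) (t (k + 1)) (ht (k + 1)))) := by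
        rw [inducedMap_ofMeasure, ProbabilityMeasure.map_convexComb _ _ _ _ (hf k).measurable,
          ProbabilityMeasure.map_diracProba _ (hf k).measurable,
          ProbabilityMeasure.map_diracProba _ (hf k).measurable, hp k]
        rfl
    _ ≤ (t (k + 1) - t k : ℝ≥0) := dist_ofMeasure_convexComb_le _ _ (ht_mono k) _ _
    _ ≤ 1 / n := by exact_mod_cast ht_succ k

theorem exists_nonempty_image_ball_inter_ball_of_shadowing {f : ℕ → X → X}
    (hf : ∀ n, Continuous (f n)) (hsurj : ∀ n, (f n).Surjective)
    (hS : NAShadowing (fun n => inducedMap (f n) (hf n))) {ε : ℝ} (hε : 0 < ε) (hε' : ε < 1 / 2) :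
    ∃ N, 1 ≤ N ∧ ∀ n, N ≤ n → ∀ x y : X, (nacomp f n '' ball x ε ∩ ball y ε).Nonempty := by
  obtain ⟨δ, hδ, hshadow⟩ := hS ε hε
  obtain ⟨N, hN⟩ := exists_nat_one_div_lt hδ
  refine ⟨N + 1, by omega, fun n hn x y => ?_⟩
  obtain ⟨μ, hμ, hμ₀, hμₙ⟩ := exists_pseudoOrbit_diracProba hf hsurj (by omega : n ≠ 0) x y
  have hstep : (1 : ℝ) / n < δ :=
    lt_of_le_of_lt (one_div_le_one_div_of_le (by positivity) (by exact_mod_cast hn)) hN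
  obtain ⟨z, hz⟩ := hshadow μ fun k => (hμ k).trans_lt hstep
  have hx : 1 - ε ≤ (z.toMeasure : Measure X).real (ball x ε) :=
    one_sub_le_measureReal_ball_of_dist_diracProba_lt hε (hμ₀ ▸ hz 0)
  have hy : 1 - ε ≤ (z.toMeasure : Measure X).real (nacomp f n ⁻¹' ball y ε) := by
    have := one_sub_le_measureReal_ball_of_dist_diracProba_lt hε (hμₙ ▸ hz n)
    rwa [toMeasure_nacomp_inducedMap, map_measureReal_apply (continuous_nacomp f hf n).measurable
      measurableSet_ball] at this
  obtain ⟨a, hax, hay⟩ := nonempty_inter_of_measureReal_lt_add (μ := (z.toMeasure : Measure X))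
    (s := ball x ε) (measurableSet_ball.preimage (continuous_nacomp f hf n).measurable)
    (subset_univ _) (subset_univ _) (by rw [probReal_univ]; linarith)
  exact ⟨nacomp f n a, mem_image_of_mem _ hax, hay⟩

end Induced

theorem induced_not_shadowing_of_not_mixing_general
    {X : Type*} [MetricSpace X] [MeasurableSpace X] [BorelSpace X]
    (f : ℕ → X → X) (hf : ∀ n, Continuous (f n)) (hsurj : ∀ n, Function.Surjective (f n))
    (hnm : ¬ NAMixing f) :
    ¬ NAShadowing (fun n => inducedMap (f n) (hf n)) := by
  intro hS
  refine hnm fun U V hU hV ⟨x, hxU⟩ ⟨y, hyV⟩ => ?_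
  obtain ⟨εU, hεU, hballU⟩ := isOpen_iff.mp hU x hxU
  obtain ⟨εV, hεV, hballV⟩ := isOpen_iff.mp hV y hyV
  set ε := min (min εU εV) (1 / 3)
  have hε : 0 < ε := by positivity
  obtain ⟨N, hN, hmix⟩ := exists_nonempty_image_ball_inter_ball_of_shadowing hf hsurj hS hε
    ((min_le_right _ _).trans_lt (by norm_num))
  refine ⟨N, hN, fun n hn => (hmix n hn x y).mono (inter_subset_inter (image_mono ?_) ?_)⟩
  · exact (ball_subset_ball ((min_le_left _ _).trans (min_le_left _ _))).trans hballU
  · exact (ball_subset_ball ((min_le_left _ _).trans (min_le_right _ _))).trans hballV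

/-- If all `f_n` are surjective and `(X, f_{0,∞})` is not topologically mixing, then the induced
system `(𝓜(X), f̂_{0,∞})` does not have the shadowing property. -/
theorem induced_not_shadowing_of_not_mixing
    {X : Type*} [MetricSpace X] [CompactSpace X] [MeasurableSpace X] [BorelSpace X]
    (f : ℕ → X → X) (hf : ∀ n, Continuous (f n)) (hsurj : ∀ n, Function.Surjective (f n))
    (hnm : ¬ NAMixing f) :
    ¬ NAShadowing (fun n => inducedMap (f n) (hf n)) :=
  induced_not_shadowing_of_not_mixing_general f hf hsurj hnm
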